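/- Fix δ>0. Under P^{(−δ)}, almost surely the map m ↦ X^{−,m} is continuous for locally uniform convergence on its domain: for every m>0, every T < A_∞^{−,m} and every ε>0, there exists η>0 such that for all m' with |m' − m| < η one has sup_{0≤t≤T} |X^{−,m'}_t − X^{−,m}_t| ≤ ε. -/

import Mathlib

open MeasureTheory ProbabilityTheory Set Filter Topology

noncomputable section

namespace PRBM

variable {Ω : Type} [MeasurableSpace Ω]

/-- `B` is a standard one-dimensional Brownian motion started at `0` under `P`:
continuous paths, Gaussian increments with the right variance, and independent
increments. -/
structure IsStdBM (P : Measure Ω) (B : ℝ → Ω → ℝ) : Prop where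
  cont : ∀ ω, Continuous fun t => B t ω
  init : ∀ ω, B 0 ω = 0
  meas : ∀ t, Measurable fun ω => B t ω
  gauss_incr : ∀ s t : ℝ, 0 ≤ s → s ≤ t →
    P.map (fun ω => B t ω - B s ω) = gaussianReal 0 (Real.toNNReal (t - s))
  indep_incr : ∀ (n : ℕ) (t : Fin (n + 1) → ℝ), Monotone t → 0 ≤ t 0 →
    iIndepFun (β := fun _ : Fin n => ℝ)
      (fun i ω => B (t i.succ) ω - B (t i.castSucc) ω) P

/-- `LB` is a continuous version of the local time at level `0` of `B`,
normalized by `LB t = lim_{ε→0+} ε⁻¹ Leb{s ∈ [0,t] : B s ∈ (0,ε]}` a.s. -/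
structure IsLocTime0 (P : Measure Ω) (B : ℝ → Ω → ℝ) (LB : ℝ → Ω → ℝ) : Prop where
  cont : ∀ ω, Continuous fun t => LB t ω
  init : ∀ ω, LB 0 ω = 0
  mono : ∀ ω, Monotone fun t => LB t ω
  meas : ∀ t, Measurable fun ω => LB t ω
  approx : ∀ᵐ ω ∂P, ∀ t : ℝ, 0 ≤ t →
    Tendsto (fun ε : ℝ =>
        (volume {s : ℝ | s ∈ Icc 0 t ∧ B s ω ∈ Ioc 0 ε}).toReal / ε)
      (nhdsWithin 0 (Ioi 0)) (nhds (LB t ω))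

/-- `L` is a jointly continuous version of the local time field of the process `X`:
`L t r` is the local time of `X` at time `t` and level `r`. -/
structure IsLocTime (P : Measure Ω) (X : ℝ → Ω → ℝ) (L : ℝ → ℝ → Ω → ℝ) : Prop where
  cont : ∀ ω, Continuous fun p : ℝ × ℝ => L p.1 p.2 ω
  init : ∀ r ω, L 0 r ω = 0
  mono : ∀ r ω, Monotone fun t => L t r ω
  meas : ∀ t r, Measurable fun ω => L t r ω
  approx : ∀ᵐ ω ∂P, ∀ t : ℝ, 0 ≤ t → ∀ r : ℝ,
    Tendsto (fun ε : ℝ =>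
        (volume {s : ℝ | s ∈ Icc 0 t ∧ X s ω ∈ Ioc r (r + ε)}).toReal / ε)
      (nhdsWithin 0 (Ioi 0)) (nhds (L t r ω))

/-- First hitting time of level `r` by the process `X`. -/
def hit (X : ℝ → Ω → ℝ) (r : ℝ) (ω : Ω) : ℝ := sInf {t : ℝ | 0 ≤ t ∧ X t ω = r}

/-- Last hitting time of level `r` by the process `X`. -/
def lastHit (X : ℝ → Ω → ℝ) (r : ℝ) (ω : Ω) : ℝ := sSup {t : ℝ | 0 ≤ t ∧ X t ω = r}

/-- Right-continuous inverse of the local time of `X` at level `r`: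
`invLT L r x = inf{s ≥ 0 : L s r > x}`. -/
def invLT (L : ℝ → ℝ → Ω → ℝ) (r x : ℝ) (ω : Ω) : ℝ := sInf {s : ℝ | 0 ≤ s ∧ x < L s r ω}

/-- `J(x) = inf{X_s : 0 ≤ s ≤ τ_0(x)}`, the minimum of `X` before the inverse local
time at level `0` at `x`. -/
def Jmin (X : ℝ → Ω → ℝ) (L : ℝ → ℝ → Ω → ℝ) (x : ℝ) (ω : Ω) : ℝ :=
  sInf ((fun s => X s ω) '' Icc 0 (invLT L 0 x ω))

/-- `g_m`, the last zero of `X` before the hitting time of `-m`. -/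
def lastZero (X : ℝ → Ω → ℝ) (m : ℝ) (ω : Ω) : ℝ :=
  sSup {t : ℝ | 0 ≤ t ∧ t ≤ hit X (-m) ω ∧ X t ω = 0}

/-- `I_{g_m} = inf{X_s : 0 ≤ s ≤ g_m}`. -/
def Imin (X : ℝ → Ω → ℝ) (m : ℝ) (ω : Ω) : ℝ :=
  sInf ((fun s => X s ω) '' Icc 0 (lastZero X m ω))

/-- `d_m = inf{t > g_m : X_t = I_{g_m}}`. -/
def dTime (X : ℝ → Ω → ℝ) (m : ℝ) (ω : Ω) : ℝ :=
  sInf {t : ℝ | lastZero X m ω < t ∧ X t ω = Imin X m ω}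

/-- Total local time `L(∞, r)` of `X` at level `r` (supremum over time). -/
def Ltot (L : ℝ → ℝ → Ω → ℝ) (r : ℝ) (ω : Ω) : ℝ := sSup (Set.range fun t => L t r ω)

/-- The space of continuous paths with finite duration, encoded as
(duration, path stopped at the duration). -/
abbrev PathSp : Type := ℝ × (ℝ → ℝ)

/-- The path `f` stopped at time `T`, as an element of `PathSp`. -/
def stopPath (f : ℝ → ℝ) (T : ℝ) : PathSp := (T, fun t => f (min (max t 0) T))

/-- Occupation time of `{f ≤ h}` up to time `u`. -/
def occBelow (f : ℝ → ℝ) (h u : ℝ) : ℝ := (volume {s : ℝ | s ∈ Icc 0 u ∧ f s ≤ h}).toReal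

/-- Occupation time of `{f > h}` up to time `u`. -/
def occAbove (f : ℝ → ℝ) (h u : ℝ) : ℝ := (volume {s : ℝ | s ∈ Icc 0 u ∧ h < f s}).toReal

/-- The time-changed path obtained by removing from `f` its excursions above level `h`. -/
def tcBelow (f : ℝ → ℝ) (h t : ℝ) : ℝ := f (sInf {u : ℝ | 0 ≤ u ∧ t < occBelow f h u})

/-- The time-changed path obtained by removing from `f` its excursions below or at level `h`. -/
def tcAbove (f : ℝ → ℝ) (h t : ℝ) : ℝ := f (sInf {u : ℝ | 0 ≤ u ∧ t < occAbove f h u})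

/-- The path `f`, considered up to time `T`, with its excursions above level `h` removed. -/
def pathBelow (f : ℝ → ℝ) (T h : ℝ) : PathSp :=
  (occBelow f h T, fun t => tcBelow f h (min (max t 0) (occBelow f h T)))

/-- The path `f`, considered on `[0,∞)`, with its excursions above level `h` removed
(duration `A_∞^{-,h}`). -/
def pathBelowInf (f : ℝ → ℝ) (h : ℝ) : PathSp :=
  (sSup (Set.range fun u => occBelow f h u),
   fun t => tcBelow f h (min (max t 0) (sSup (Set.range fun u => occBelow f h u))))

/-- The path `f`, considered up to time `T`, with its excursions below (or at) level `h`
removed. -/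
def pathAbove (f : ℝ → ℝ) (T h : ℝ) : PathSp :=
  (occAbove f h T, fun t => tcAbove f h (min (max t 0) (occAbove f h T)))

/-- The beta(a,b) distribution on `(0,1)`. -/
def betaMeasure' (a b : ℝ) : Measure ℝ :=
  volume.withDensity (Set.indicator (Set.Ioo 0 1) fun x =>
    ENNReal.ofReal (Real.Gamma (a + b) / (Real.Gamma a * Real.Gamma b) *
      x ^ (a - 1) * (1 - x) ^ (b - 1)))

/-- `W` is a standard three-dimensional Brownian motion started at the origin. -/
structure IsBM3 (P : Measure Ω) (W : ℝ → Ω → Fin 3 → ℝ) : Prop where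
  coord : ∀ i : Fin 3, IsStdBM P fun t ω => W t ω i
  indep : iIndepFun (β := fun _ : Fin 3 => ℝ → ℝ)
    (fun i ω t => W t ω i) P

/-- The three-dimensional Bessel process built from the 3D Brownian motion `W`:
the Euclidean norm of `W`. -/
def bessel3 (W : ℝ → Ω → Fin 3 → ℝ) (t : ℝ) (ω : Ω) : ℝ :=
  Real.sqrt (∑ i, W t ω i ^ 2)

end PRBM

open PRBM

/-! For a fixed continuous path `f`, `X^{-,m}_t = f (α_m t)`, where `α_m` is the right-continuous
inverse of the occupation time `A_m u = Leb {s ∈ [0, u] : f s ≤ m}`. Put `a = α_{m'} t` and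
`b = α_m t`. Since `A_{m'} a = t = A_m b`, the increment of `A_m` between `a` and `b` is at most
the time `f` spends in the strip between `m` and `m'`, which is small for `m'` near `m` as soon as
`f` spends no time at level `m`. Until `min f m` has moved by `ε`, `f` stays below `m`, so a small
increment of `A_m` forces `min f m` to be nearly the same at `a` and `b`; with `f a ≤ m'` and
`f b ≤ m` this gives `|X^{-,m'}_t - X^{-,m}_t| ≤ ε` uniformly in `t`.

For `X = |B| + (2/δ) 𝔏`, the local time `𝔏` is constant off the zeros of `B`, so each level set
of `X` is covered by countably many level sets of `B`. These are a.s. all Lebesgue-null: by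
Fubini, a.s. the pairs of times at which `B` takes equal values form a null set of the plane,
since `B t - B s` has no atom for `s ≠ t`. -/

namespace PRBM

theorem measure_sep_ne_top {α : Type*} [MeasurableSpace α] {μ : Measure α} {I : Set α}
    {p : α → Prop} (hI : μ I < ⊤) : μ {x | x ∈ I ∧ p x} ≠ ⊤ :=
  (measure_lt_top_of_subset (fun _ hx => hx.1) hI.ne).ne

section Occupation

variable {f : ℝ → ℝ} {h a c u u₀ : ℝ}

theorem occBelow_of_nonpos (hu : u ≤ 0) : occBelow f h u = 0 := by
  have : volume {s | s ∈ Icc 0 u ∧ f s ≤ h} = 0 :=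
    measure_mono_null (fun _ hs => hs.1) (by simp [Real.volume_Icc, hu])
  rw [occBelow, this, ENNReal.toReal_zero]

theorem monotone_occBelow : Monotone (occBelow f h) := fun _ _ huv =>
  ENNReal.toReal_mono (measure_sep_ne_top measure_Icc_lt_top)
    (measure_mono fun _ hs => ⟨⟨hs.1.1, hs.1.2.trans huv⟩, hs.2⟩)

theorem occBelow_le_add_volume_Ioc :
    occBelow f h c ≤ occBelow f h a + (volume {s | s ∈ Ioc a c ∧ f s ≤ h}).toReal := by
  have hsub : {s | s ∈ Icc 0 c ∧ f s ≤ h} ⊆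
      {s | s ∈ Icc 0 a ∧ f s ≤ h} ∪ {s | s ∈ Ioc a c ∧ f s ≤ h} := by
    rintro s ⟨⟨hs0, hsc⟩, hfs⟩
    rcases le_or_gt s a with hsa | hsa
    exacts [Or.inl ⟨⟨hs0, hsa⟩, hfs⟩, Or.inr ⟨⟨hsa, hsc⟩, hfs⟩]
  have h₁ : volume {s | s ∈ Icc 0 a ∧ f s ≤ h} ≠ ⊤ := measure_sep_ne_top measure_Icc_lt_top
  have h₂ : volume {s | s ∈ Ioc a c ∧ f s ≤ h} ≠ ⊤ := measure_sep_ne_top measure_Ioc_lt_top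
  rw [occBelow, occBelow, ← ENNReal.toReal_add h₁ h₂]
  exact ENNReal.toReal_mono (ENNReal.add_ne_top.2 ⟨h₁, h₂⟩)
    ((measure_mono hsub).trans (measure_union_le _ _))

theorem occBelow_le_add_sub (hac : a ≤ c) : occBelow f h c ≤ occBelow f h a + (c - a) := by
  refine occBelow_le_add_volume_Ioc.trans (add_le_add le_rfl ?_)
  calc (volume {s | s ∈ Ioc a c ∧ f s ≤ h}).toReal ≤ (volume (Ioc a c)).toReal :=
        ENNReal.toReal_mono (measure_Ioc_lt_top (μ := volume)).ne (measure_mono fun _ hs => hs.1)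
    _ = c - a := by simp [Real.volume_Ioc, hac]

theorem lipschitzWith_occBelow : LipschitzWith 1 (occBelow f h) := by
  refine LipschitzWith.of_dist_le_mul fun x y => ?_
  wlog hxy : y ≤ x generalizing x y
  · rw [dist_comm, dist_comm x]; exact this y x (le_of_not_ge hxy)
  rw [NNReal.coe_one, one_mul, Real.dist_eq, Real.dist_eq, abs_of_nonneg (sub_nonneg.2 hxy),
    abs_of_nonneg (sub_nonneg.2 (monotone_occBelow hxy))]
  linarith [occBelow_le_add_sub (f := f) (h := h) hxy]

theorem continuous_occBelow : Continuous (occBelow f h) := lipschitzWith_occBelow.continuous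

theorem occBelow_add_volume_Ioo_le (hf : Measurable f) (ha : 0 ≤ a) (hac : a ≤ c) :
    occBelow f h a + (volume {s | s ∈ Ioo a c ∧ f s ≤ h}).toReal ≤ occBelow f h c := by
  have hdisj : Disjoint {s | s ∈ Icc 0 a ∧ f s ≤ h} {s | s ∈ Ioo a c ∧ f s ≤ h} :=
    disjoint_left.2 fun _ hs ht => (not_lt.2 hs.1.2) ht.1.1
  have hsub : {s | s ∈ Icc 0 a ∧ f s ≤ h} ∪ {s | s ∈ Ioo a c ∧ f s ≤ h} ⊆
      {s | s ∈ Icc 0 c ∧ f s ≤ h} := by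
    rintro s (⟨⟨hs0, hsa⟩, hfs⟩ | ⟨⟨has, hsc⟩, hfs⟩)
    exacts [⟨⟨hs0, hsa.trans hac⟩, hfs⟩, ⟨⟨ha.trans has.le, hsc.le⟩, hfs⟩]
  rw [occBelow, occBelow, ← ENNReal.toReal_add (measure_sep_ne_top measure_Icc_lt_top)
    (measure_sep_ne_top measure_Ioo_lt_top),
    ← measure_union hdisj (measurableSet_Ioo.inter (hf measurableSet_Iic))]
  exact ENNReal.toReal_mono (measure_sep_ne_top measure_Icc_lt_top) (measure_mono hsub)

theorem occBelow_le_add_volume_strip {m m₁ m₂ r : ℝ} (hu : u ≤ u₀) (h₁ : |m₁ - m| ≤ r)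
    (h₂ : |m₂ - m| ≤ r) :
    occBelow f m₁ u ≤
      occBelow f m₂ u + (volume {s | s ∈ Icc 0 u₀ ∧ |f s - m| ≤ r}).toReal := by
  have hsub : {s | s ∈ Icc 0 u ∧ f s ≤ m₁} ⊆
      {s | s ∈ Icc 0 u ∧ f s ≤ m₂} ∪ {s | s ∈ Icc 0 u₀ ∧ |f s - m| ≤ r} := by
    rintro s ⟨hs, hfs⟩
    rcases le_or_gt (f s) m₂ with hs₂ | hs₂
    · exact Or.inl ⟨hs, hs₂⟩
    · refine Or.inr ⟨⟨hs.1, hs.2.trans hu⟩, abs_le.2 ⟨?_, ?_⟩⟩ <;>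
        linarith [(abs_le.1 h₁).1, (abs_le.1 h₁).2, (abs_le.1 h₂).1, (abs_le.1 h₂).2]
  have h₁ : volume {s | s ∈ Icc 0 u ∧ f s ≤ m₂} ≠ ⊤ := measure_sep_ne_top measure_Icc_lt_top
  have h₂ : volume {s | s ∈ Icc 0 u₀ ∧ |f s - m| ≤ r} ≠ ⊤ :=
    measure_sep_ne_top measure_Icc_lt_top
  rw [occBelow, occBelow, ← ENNReal.toReal_add h₁ h₂]
  exact ENNReal.toReal_mono (ENNReal.add_ne_top.2 ⟨h₁, h₂⟩)
    ((measure_mono hsub).trans (measure_union_le _ _))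

theorem exists_volume_strip_lt (hf : Measurable f) {m κ : ℝ}
    (hm : volume {s | s ∈ Icc 0 u₀ ∧ f s = m} = 0) (hκ : 0 < κ) :
    ∃ η > 0, (volume {s | s ∈ Icc 0 u₀ ∧ |f s - m| ≤ η}).toReal < κ := by
  set S : ℝ → Set ℝ := fun r => {s | s ∈ Icc 0 u₀ ∧ |f s - m| ≤ r}
  have hinter : ⋂ r > 0, S r = {s | s ∈ Icc 0 u₀ ∧ f s = m} := by
    ext s
    simp only [S, mem_iInter, mem_ofPred_eq]
    refine ⟨fun hs => ⟨(hs 1 one_pos).1, ?_⟩, fun hs r hr => ⟨hs.1, by simp [hs.2, hr.le]⟩⟩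
    exact sub_eq_zero.1 (abs_nonpos_iff.1 (le_of_forall_pos_le_add fun r hr => by
      simpa using (hs r hr).2))
  have hlim : Tendsto (volume ∘ S) (𝓝[>] 0) (𝓝 0) := by
    rw [← hm, ← hinter]
    refine tendsto_measure_biInter_gt (fun r _ => ?_) (fun i j _ hij s hs => ⟨hs.1, hs.2.trans hij⟩)
      ⟨1, one_pos, measure_sep_ne_top (μ := volume) measure_Icc_lt_top⟩
    exact (measurableSet_Icc.inter (measurableSet_le ((hf.sub_const m).abs)
      measurable_const)).nullMeasurableSet
  obtain ⟨η, hηS, hη⟩ :=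
    ((hlim.eventually (gt_mem_nhds (ENNReal.ofReal_pos.2 hκ))).and self_mem_nhdsWithin).exists
  exact ⟨η, hη, ENNReal.toReal_lt_of_lt_ofReal hηS⟩

end Occupation

/-- The right-continuous inverse `α^{-,h}` of `occBelow f h`. -/
def occBelowInv (f : ℝ → ℝ) (h t : ℝ) : ℝ := sInf {u : ℝ | 0 ≤ u ∧ t < occBelow f h u}

section Inverse

variable {f : ℝ → ℝ} {h t u₀ : ℝ}

theorem tcBelow_eq (f : ℝ → ℝ) (h t : ℝ) : tcBelow f h t = f (occBelowInv f h t) := rfl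

theorem bddBelow_occBelowInv_set : BddBelow {u : ℝ | 0 ≤ u ∧ t < occBelow f h u} :=
  ⟨0, fun _ hu => hu.1⟩

theorem occBelowInv_nonneg (hu₀ : 0 ≤ u₀) (ht : t < occBelow f h u₀) :
    0 ≤ occBelowInv f h t :=
  le_csInf ⟨u₀, hu₀, ht⟩ fun _ hu => hu.1

theorem occBelowInv_le (hu₀ : 0 ≤ u₀) (ht : t < occBelow f h u₀) : occBelowInv f h t ≤ u₀ :=
  csInf_le bddBelow_occBelowInv_set ⟨hu₀, ht⟩

theorem lt_occBelow_of_occBelowInv_lt (hu₀ : 0 ≤ u₀) (ht : t < occBelow f h u₀) {u : ℝ}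
    (hu : occBelowInv f h t < u) : t < occBelow f h u := by
  obtain ⟨w, hw, hwu⟩ :=
    exists_lt_of_csInf_lt (s := {u : ℝ | 0 ≤ u ∧ t < occBelow f h u}) ⟨u₀, hu₀, ht⟩ hu
  exact hw.2.trans_le (monotone_occBelow hwu.le)

theorem occBelow_occBelowInv (hu₀ : 0 ≤ u₀) (ht : t < occBelow f h u₀) (ht₀ : 0 ≤ t) :
    occBelow f h (occBelowInv f h t) = t := by
  have hge : t ≤ occBelow f h (occBelowInv f h t) :=
    closure_minimal (fun u hu => hu.2.le) (isClosed_le continuous_const continuous_occBelow)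
      (csInf_mem_closure ⟨u₀, hu₀, ht⟩ bddBelow_occBelowInv_set)
  have hmin : ∀ u, 0 ≤ u → t < occBelow f h u → occBelowInv f h t ≤ u :=
    fun u hu htu => csInf_le bddBelow_occBelowInv_set ⟨hu, htu⟩
  have hα₀ := occBelowInv_nonneg hu₀ ht
  generalize occBelowInv f h t = α at *
  refine le_antisymm (not_lt.1 fun hlt => ?_) hge
  -- `α > 0` since `occBelow` vanishes at `0`; then times slightly before `α` are admissible too.
  have hα : 0 < α := hα₀.lt_of_ne fun h0 => by
    rw [← h0, occBelow_of_nonpos le_rfl] at hlt; linarith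
  obtain ⟨l, hlα, hl⟩ := exists_Ioc_subset_of_mem_nhds
    ((isOpen_lt continuous_const continuous_occBelow).mem_nhds hlt) ⟨0, hα⟩
  obtain ⟨w, hlw, hwα⟩ := exists_between (max_lt hlα hα)
  linarith [hmin w (le_of_max_le_right hlw.le)
    (hl ⟨lt_of_le_of_lt (le_max_left l 0) hlw, hwα.le⟩)]

theorem apply_occBelowInv_le (hu₀ : 0 ≤ u₀) (ht : t < occBelow f h u₀) (hf : Continuous f)
    (ht₀ : 0 ≤ t) : f (occBelowInv f h t) ≤ h := by
  have hocc := occBelow_occBelowInv hu₀ ht ht₀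
  have hlt : ∀ u, occBelowInv f h t < u → t < occBelow f h u :=
    fun _ => lt_occBelow_of_occBelowInv_lt hu₀ ht
  generalize occBelowInv f h t = α at *
  by_contra! hgt
  -- just after `α`, `f > h`, so the occupation time cannot increase past `t`
  obtain ⟨c, hαc, hc⟩ := exists_Ico_subset_of_mem_nhds
    (hf.continuousAt.preimage_mem_nhds (Ioi_mem_nhds hgt)) ⟨α + 1, lt_add_one α⟩
  have hempty : {s | s ∈ Ioc α ((α + c) / 2) ∧ f s ≤ h} = ∅ :=
    eq_empty_of_forall_notMem fun s hs =>
      not_le.2 (hc ⟨hs.1.1.le, by linarith [hs.1.2]⟩) hs.2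
  have hle := occBelow_le_add_volume_Ioc (f := f) (h := h) (a := α) (c := (α + c) / 2)
  rw [hempty, measure_empty, ENNReal.toReal_zero, add_zero, hocc] at hle
  linarith [hlt ((α + c) / 2) (by linarith)]

end Inverse

section Oscillation

variable {f : ℝ → ℝ} {m ε ρ a c : ℝ}

/-- Up to the first time `min f m` has risen by `ε`, `f` stays below `m`. -/
theorem ofReal_le_volume_of_rise (hf : Continuous f) (hac : a ≤ c)
    (hρ : ∀ x ∈ Icc a c, ∀ y ∈ Icc a c, dist x y < ρ → dist (min (f x) m) (min (f y) m) < ε)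
    (hrise : min (f a) m + ε ≤ min (f c) m) :
    ENNReal.ofReal ρ ≤ volume {s | s ∈ Ioo a c ∧ f s ≤ m} := by
  set R := {u | u ∈ Icc a c ∧ min (f a) m + ε ≤ min (f u) m}
  have hRbdd : BddBelow R := ⟨a, fun _ hu => hu.1.1⟩
  have hq : sInf R ∈ R :=
    (isClosed_Icc.inter (isClosed_le continuous_const (hf.min continuous_const))).csInf_mem
      ⟨c, ⟨hac, le_rfl⟩, hrise⟩ hRbdd
  have hρq : ρ ≤ sInf R - a := by
    by_contra! hlt
    have hd := hρ _ hq.1 a ⟨le_rfl, hac⟩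
      (by rw [Real.dist_eq, abs_of_nonneg] <;> linarith [hq.1.1])
    rw [Real.dist_eq] at hd
    linarith [le_abs_self (min (f (sInf R)) m - min (f a) m), hq.2]
  have hsub : Ioo a (sInf R) ⊆ {s | s ∈ Ioo a c ∧ f s ≤ m} := by
    intro s hs
    have hsR : s ∉ R := notMem_of_lt_csInf hs.2 hRbdd
    have hlt : min (f s) m < m := by
      linarith [min_le_right (f c) m,
        not_le.1 fun h => hsR ⟨⟨hs.1.le, hs.2.le.trans hq.1.2⟩, h⟩]
    exact ⟨⟨hs.1, hs.2.trans_le hq.1.2⟩, ((min_lt_iff.1 hlt).resolve_right (lt_irrefl m)).le⟩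
  calc ENNReal.ofReal ρ ≤ ENNReal.ofReal (sInf R - a) := ENNReal.ofReal_le_ofReal hρq
    _ = volume (Ioo a (sInf R)) := Real.volume_Ioo.symm
    _ ≤ _ := measure_mono hsub

theorem ofReal_le_volume_of_fall (hf : Continuous f) (hac : a ≤ c)
    (hρ : ∀ x ∈ Icc a c, ∀ y ∈ Icc a c, dist x y < ρ → dist (min (f x) m) (min (f y) m) < ε)
    (hfall : min (f c) m + ε ≤ min (f a) m) :
    ENNReal.ofReal ρ ≤ volume {s | s ∈ Ioo a c ∧ f s ≤ m} := by
  have hρ' : ∀ x ∈ Icc (-c) (-a), ∀ y ∈ Icc (-c) (-a), dist x y < ρ →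
      dist (min (f (-x)) m) (min (f (-y)) m) < ε := fun x hx y hy hxy =>
    hρ (-x) ⟨by linarith [hx.2], by linarith [hx.1]⟩ (-y) ⟨by linarith [hy.2], by linarith [hy.1]⟩
      (by rwa [dist_neg_neg])
  have hset : {s | s ∈ Ioo (-c) (-a) ∧ f (-s) ≤ m} = -{s | s ∈ Ioo a c ∧ f s ≤ m} := by
    ext s
    simp only [Set.mem_neg, mem_ofPred_eq, mem_Ioo]
    constructor <;> rintro ⟨⟨h₁, h₂⟩, h₃⟩ <;> refine ⟨⟨?_, ?_⟩, h₃⟩ <;> linarith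
  have := ofReal_le_volume_of_rise (f := fun s => f (-s)) (hf.comp continuous_neg)
    (neg_le_neg hac) hρ' (by simpa only [neg_neg] using hfall)
  rwa [hset, Measure.measure_neg] at this

theorem dist_min_le_of_volume_lt (hf : Continuous f) (hac : a ≤ c)
    (hρ : ∀ x ∈ Icc a c, ∀ y ∈ Icc a c, dist x y < ρ → dist (min (f x) m) (min (f y) m) < ε)
    (hvol : volume {s | s ∈ Ioo a c ∧ f s ≤ m} < ENNReal.ofReal ρ) :
    dist (min (f a) m) (min (f c) m) ≤ ε := by
  rw [Real.dist_eq, abs_le]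
  constructor
  · by_contra! h
    exact (ofReal_le_volume_of_rise hf hac hρ (by linarith)).not_gt hvol
  · by_contra! h
    exact (ofReal_le_volume_of_fall hf hac hρ (by linarith)).not_gt hvol

theorem dist_min_le_of_occBelow_sub_lt (hf : Continuous f) {u₀ : ℝ}
    (hρ : ∀ x ∈ Icc 0 u₀, ∀ y ∈ Icc 0 u₀, dist x y < ρ → dist (min (f x) m) (min (f y) m) < ε)
    (ha : 0 ≤ a) (hac : a ≤ c) (hc : c ≤ u₀) (hocc : occBelow f m c - occBelow f m a < ρ) :
    dist (min (f a) m) (min (f c) m) ≤ ε := by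
  have hsub : Icc a c ⊆ Icc 0 u₀ := Icc_subset_Icc ha hc
  refine dist_min_le_of_volume_lt hf hac (fun x hx y hy => hρ x (hsub hx) y (hsub hy)) ?_
  have hvol := occBelow_add_volume_Ioo_le (h := m) hf.measurable ha hac
  exact (ENNReal.lt_ofReal_iff_toReal_lt (measure_sep_ne_top measure_Ioo_lt_top)).2
    (by linarith)

end Oscillation

theorem exists_abs_tcBelow_sub_le {f : ℝ → ℝ} (hf : Continuous f) {m T u₀ ε : ℝ}
    (hu₀ : 0 ≤ u₀) (hT : T < occBelow f m u₀)
    (hm : volume {s | s ∈ Icc 0 u₀ ∧ f s = m} = 0) (hε : 0 < ε) :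
    ∃ η > 0, ∀ m', |m' - m| < η → ∀ t ∈ Icc 0 T, |tcBelow f m' t - tcBelow f m t| ≤ ε := by
  obtain ⟨ρ, hρ, hφ⟩ := Metric.uniformContinuousOn_iff.1
    ((isCompact_Icc (a := 0) (b := u₀)).uniformContinuousOn_of_continuous
      (hf.min (continuous_const (y := m))).continuousOn)
    (ε / 2) (half_pos hε)
  obtain ⟨η, hη, hstrip⟩ := exists_volume_strip_lt hf.measurable hm (lt_min hρ (sub_pos.2 hT))
  obtain ⟨hσρ, hσT⟩ := lt_min_iff.1 hstrip
  refine ⟨min η (ε / 2), lt_min hη (half_pos hε), fun m' hm' t ht => ?_⟩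
  have hm'η : |m' - m| ≤ η := hm'.le.trans (min_le_left _ _)
  have hm'ε : |m' - m| < ε / 2 := hm'.trans_le (min_le_right _ _)
  have hmη : |m - m| ≤ η := by simpa using hη.le
  have ht' : t < occBelow f m' u₀ := by
    linarith [occBelow_le_add_volume_strip (f := f) (le_refl u₀) hmη hm'η, ht.2]
  have ht'' : t < occBelow f m u₀ := ht.2.trans_lt hT
  rw [tcBelow_eq, tcBelow_eq]
  have ha := occBelowInv_nonneg hu₀ ht'
  have ha' := occBelowInv_le hu₀ ht'
  have hb := occBelowInv_nonneg hu₀ ht''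
  have hb' := occBelowInv_le hu₀ ht''
  have hAa := occBelow_occBelowInv hu₀ ht' ht.1
  have hAb := occBelow_occBelowInv hu₀ ht'' ht.1
  have hfa := apply_occBelowInv_le hu₀ ht' hf ht.1
  have hfb := apply_occBelowInv_le hu₀ ht'' hf ht.1
  generalize occBelowInv f m' t = a at *
  generalize occBelowInv f m t = b at *
  have hab : |occBelow f m a - occBelow f m b| < ρ := by
    rw [abs_lt]
    constructor <;> linarith [occBelow_le_add_volume_strip (f := f) ha' hmη hm'η,
      occBelow_le_add_volume_strip (f := f) ha' hm'η hmη]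
  have hosc : dist (min (f a) m) (min (f b) m) ≤ ε / 2 := by
    rcases le_total a b with hle | hle
    · exact dist_min_le_of_occBelow_sub_lt hf hφ ha hle hb' (by linarith [abs_lt.1 hab])
    · rw [dist_comm]
      exact dist_min_le_of_occBelow_sub_lt hf hφ hb hle ha' (by linarith [abs_lt.1 hab])
  have htrunc : |f a - min (f a) m| ≤ |m' - m| := by
    rcases le_total (f a) m with h | h
    · simp [min_eq_left h]
    · rw [min_eq_right h, abs_of_nonneg (sub_nonneg.2 h)]
      exact (sub_le_sub_right hfa m).trans (le_abs_self _)
  rw [Real.dist_eq, min_eq_left hfb] at hosc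
  calc |f a - f b| ≤ |f a - min (f a) m| + |min (f a) m - f b| := abs_sub_le _ _ _
    _ ≤ ε := by linarith

namespace IsStdBM

variable {Ω : Type} [MeasurableSpace Ω] {P : Measure Ω} {B : ℝ → Ω → ℝ}

theorem measure_eq_eq_zero (hB : IsStdBM P B) {s t : ℝ} (hs : 0 ≤ s) (ht : 0 ≤ t)
    (hst : s ≠ t) : P {ω | B s ω = B t ω} = 0 := by
  wlog hlt : s < t generalizing s t
  · simpa only [eq_comm] using this ht hs hst.symm (hst.lt_or_gt.resolve_left hlt)
  have hv : (t - s).toNNReal ≠ 0 := (Real.toNNReal_pos.2 (sub_pos.2 hlt)).ne'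
  have : NullSingletonClass (gaussianReal 0 (t - s).toNNReal) :=
    nullSingletonClass_gaussianReal hv
  have hset : {ω | B s ω = B t ω} = (fun ω => B t ω - B s ω) ⁻¹' {0} := by
    ext ω; simp [sub_eq_zero, eq_comm]
  have hm : Measurable fun ω => B t ω - B s ω := (hB.meas t).sub (hB.meas s)
  rw [hset, ← Measure.map_apply hm (measurableSet_singleton 0),
    hB.gauss_incr s t hs hlt.le, measure_singleton]

theorem ae_volume_levelSet_eq_zero [IsProbabilityMeasure P] (hB : IsStdBM P B) :
    ∀ᵐ ω ∂P, ∀ a, volume {t | 0 ≤ t ∧ B t ω = a} = 0 := by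
  have hjoint : Measurable (Function.uncurry B) :=
    measurable_uncurry_of_continuous_of_measurable hB.cont hB.meas
  have hmeas : MeasurableSet {q : Ω × (ℝ × ℝ) |
      (0 ≤ q.2.1 ∧ 0 ≤ q.2.2 ∧ B q.2.1 q.1 = B q.2.2 q.1) → q.2.1 = q.2.2} := by
    refine MeasurableSet.imp ?_ (measurableSet_eq_fun measurable_snd.fst measurable_snd.snd)
    exact (measurableSet_le measurable_const measurable_snd.fst).inter
      ((measurableSet_le measurable_const measurable_snd.snd).inter
        (measurableSet_eq_fun (hjoint.comp (measurable_snd.fst.prodMk measurable_fst))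
          (hjoint.comp (measurable_snd.snd.prodMk measurable_fst))))
  have hpairs : ∀ᵐ ω ∂P, ∀ᵐ p ∂(volume.prod volume : Measure (ℝ × ℝ)),
      (0 ≤ p.1 ∧ 0 ≤ p.2 ∧ B p.1 ω = B p.2 ω) → p.1 = p.2 := by
    refine (Measure.ae_ae_comm hmeas).2 (Eventually.of_forall fun p => ?_)
    by_cases hp : p.1 = p.2
    · exact Eventually.of_forall fun _ _ => hp
    by_cases hp₀ : 0 ≤ p.1 ∧ 0 ≤ p.2
    · filter_upwards [measure_eq_zero_iff_ae_notMem.1 (hB.measure_eq_eq_zero hp₀.1 hp₀.2 hp)]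
        with ω hω h using absurd h.2.2 hω
    · exact Eventually.of_forall fun _ h => absurd ⟨h.1, h.2.1⟩ hp₀
  have hdiag : ∀ᵐ p ∂(volume.prod volume : Measure (ℝ × ℝ)), p.1 ≠ p.2 :=
    (Measure.ae_prod_iff_ae_ae (measurableSet_eq_fun measurable_fst measurable_snd).compl).2
      (Eventually.of_forall fun x => (volume.ae_ne x).mono fun _ h => Ne.symm h)
  filter_upwards [hpairs] with ω hω a
  set S := {t | 0 ≤ t ∧ B t ω = a}
  have hSS : (volume.prod volume : Measure (ℝ × ℝ)) (S ×ˢ S) = 0 := by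
    refine measure_eq_zero_iff_ae_notMem.2 ?_
    filter_upwards [hω, hdiag] with p hp hne hpS
    exact hne (hp ⟨hpS.1.1, hpS.2.1, hpS.1.2.trans hpS.2.2.symm⟩)
  rwa [Measure.prod_prod, mul_self_eq_zero] at hSS

end IsStdBM

section LocalTime

variable {b ℓ : ℝ → ℝ}

theorem eq_of_tendsto_occupation_of_ne_zero (hb : Continuous b)
    (happrox : ∀ t, 0 ≤ t → Tendsto (fun ε : ℝ =>
        (volume {s : ℝ | s ∈ Icc 0 t ∧ b s ∈ Ioc 0 ε}).toReal / ε) (𝓝[>] 0) (𝓝 (ℓ t)))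
    {q t : ℝ} (hq : 0 ≤ q) (hqt : q ≤ t) (hne : ∀ s ∈ Icc q t, b s ≠ 0) : ℓ q = ℓ t := by
  obtain ⟨s₀, hs₀, hmin⟩ :=
    isCompact_Icc.exists_isMinOn ⟨q, le_rfl, hqt⟩ (continuous_abs.comp hb).continuousOn
  -- below `|b s₀|`, the approximating occupation sets at times `q` and `t` coincide
  refine tendsto_nhds_unique ((happrox q hq).congr' ?_) (happrox t (hq.trans hqt))
  filter_upwards [Ioo_mem_nhdsGT (abs_pos.2 (hne s₀ hs₀))] with ε hε
  congr 3
  ext s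
  refine ⟨fun hs => ⟨⟨hs.1.1, hs.1.2.trans hqt⟩, hs.2⟩,
    fun hs => ⟨⟨hs.1.1, not_lt.1 fun hqs => ?_⟩, hs.2⟩⟩
  have : |b s₀| ≤ |b s| := hmin ⟨hqs.le, hs.1.2⟩
  linarith [abs_of_pos hs.2.1, hs.2.2, hε.2]

/-- Off the zeros of `b`, `ℓ t = ℓ q` for some rational `q` slightly before `t`, so the level set
is covered by the zero set of `b` and countably many level sets of `b`. -/
theorem volume_abs_add_mul_eq_zero (hb : Continuous b) (hb₀ : b 0 = 0)
    (hatoms : ∀ a, volume {t | 0 ≤ t ∧ b t = a} = 0)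
    (hconst : ∀ q t, 0 ≤ q → q ≤ t → (∀ s ∈ Icc q t, b s ≠ 0) → ℓ q = ℓ t) (c m : ℝ) :
    volume {t | 0 ≤ t ∧ |b t| + c * ℓ t = m} = 0 := by
  refine measure_mono_null (t := {t | 0 ≤ t ∧ b t = 0} ∪ ⋃ q : ℚ,
      ({t | 0 ≤ t ∧ b t = m - c * ℓ q} ∪ {t | 0 ≤ t ∧ b t = -(m - c * ℓ q)})) ?_
    (measure_union_null (hatoms 0)
      (measure_iUnion_null fun q => measure_union_null (hatoms _) (hatoms _)))
  rintro t ⟨ht₀, hX⟩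
  by_cases hbt : b t = 0
  · exact Or.inl ⟨ht₀, hbt⟩
  have htpos : 0 < t := ht₀.lt_of_ne (by rintro rfl; exact hbt hb₀)
  obtain ⟨l, hlt, hl⟩ := exists_Ioc_subset_of_mem_nhds
    (hb.continuousAt.preimage_mem_nhds (isOpen_compl_singleton.mem_nhds hbt)) ⟨0, htpos⟩
  obtain ⟨q, hlq, hqt⟩ := exists_rat_btwn (max_lt hlt htpos)
  have hℓ := hconst q t (le_of_max_le_right hlq.le) hqt.le
    fun s hs => hl ⟨((le_max_left l 0).trans_lt hlq).trans_le hs.1, hs.2⟩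
  refine Or.inr (mem_iUnion.2 ⟨q, ?_⟩)
  rw [hℓ]
  rcases abs_choice (b t) with h | h
  · exact Or.inl ⟨ht₀, by linarith⟩
  · exact Or.inr ⟨ht₀, by linarith⟩

end LocalTime

end PRBM

theorem stmt17_general
    {Ω : Type} [MeasurableSpace Ω] (P : Measure Ω) [IsProbabilityMeasure P]
    (δ : ℝ)
    (B LB X : ℝ → Ω → ℝ)
    (hB : IsStdBM P B) (hLB : IsLocTime0 P B LB)
    (hX : ∀ t ω, X t ω = |B t ω| + (2 / δ) * LB t ω) :
    ∀ᵐ ω ∂P, ∀ m : ℝ, 0 < m → ∀ T : ℝ,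
      (∃ u : ℝ, 0 ≤ u ∧ T < occBelow (fun s => X s ω) m u) →
      ∀ ε : ℝ, 0 < ε → ∃ η : ℝ, 0 < η ∧ ∀ m' : ℝ, |m' - m| < η →
        ∀ t ∈ Icc (0 : ℝ) T,
          |tcBelow (fun s => X s ω) m' t - tcBelow (fun s => X s ω) m t| ≤ ε := by
  filter_upwards [hLB.approx, hB.ae_volume_levelSet_eq_zero] with ω happrox hatoms
  rintro m - T ⟨u₀, hu₀, hT⟩ ε hε
  have hXω : (fun s => X s ω) = fun s => |B s ω| + 2 / δ * LB s ω := funext fun s => hX s ω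
  rw [hXω] at hT ⊢
  have hconst : ∀ q t, 0 ≤ q → q ≤ t → (∀ s ∈ Icc q t, B s ω ≠ 0) → LB q ω = LB t ω :=
    fun q t => eq_of_tendsto_occupation_of_ne_zero (hB.cont ω) happrox
  refine exists_abs_tcBelow_sub_le
    ((continuous_abs.comp (hB.cont ω)).add (continuous_const.mul (hLB.cont ω))) hu₀ hT ?_ hε
  refine measure_mono_null ?_
    (volume_abs_add_mul_eq_zero (hB.cont ω) (hB.init ω) hatoms hconst (2 / δ) m)
  exact fun s hs => ⟨hs.1.1, hs.2⟩

/-- Fix `δ>0`. Under `P^{(-δ)}`, almost surely the map `m ↦ X^{-,m}`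
is continuous for locally uniform convergence on its domain: for every `m>0`, every
`T < A_∞^{-,m}` and every `ε>0` there is `η>0` such that `|m'-m| < η` implies
`sup_{0≤t≤T} |X^{-,m'}_t - X^{-,m}_t| ≤ ε`. (Here `T < A_∞^{-,m}` is expressed as
`∃ u ≥ 0, T < A^{-,m}_u`.) -/
theorem stmt17
    {Ω : Type} [MeasurableSpace Ω] (P : Measure Ω) [IsProbabilityMeasure P]
    (δ : ℝ) (hδ : 0 < δ)
    (B LB X : ℝ → Ω → ℝ)
    (hB : IsStdBM P B) (hLB : IsLocTime0 P B LB)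
    (hX : ∀ t ω, X t ω = |B t ω| + (2 / δ) * LB t ω) :
    ∀ᵐ ω ∂P, ∀ m : ℝ, 0 < m → ∀ T : ℝ,
      (∃ u : ℝ, 0 ≤ u ∧ T < occBelow (fun s => X s ω) m u) →
      ∀ ε : ℝ, 0 < ε → ∃ η : ℝ, 0 < η ∧ ∀ m' : ℝ, |m' - m| < η →
        ∀ t ∈ Icc (0 : ℝ) T,
          |tcBelow (fun s => X s ω) m' t - tcBelow (fun s => X s ω) m t| ≤ ε :=
  stmt17_general P δ B LB X hB hLB hX
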